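/- In A₀ one has (ij)^m ≠ i^m j^m for every m ≥ 2 (in particular ijij ≠ i²j²), whereas in M₀ one has (ij)^m = i^m j^m for all m ≥ 1; consequently the surjective ℚ-algebra homomorphism A₀ → ℚ[M₀] sending i ↦ i and j ↦ j is not injective, i.e. the monoid algebra of the composition monoid is a proper factor of the composition algebra at q = 0. -/

import Mathlib

/-!
The relation `(ij)^m = i^m j^m` of `M₀` fails in `A₀` already in the two-dimensional
representation `i ↦ E₁₂`, `j ↦ E₂₁`: there `E₁₂` and `E₂₁` square to zero, so every relation
of `A₀` holds (each side vanishes unless it is `δ₁ δ₁ = δ₁ δ₁`), while `ij ↦ E₁₁` is a nonzero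
idempotent and `i^m j^m ↦ 0` for `m ≥ 2`. Hence `(ij)² - i²j²` is a nonzero element of `A₀`
killed by every algebra map to `ℚ[M₀]` fixing the generators; such a map is onto because
`i` and `j` generate `M₀`.
-/

open FreeAlgebra

noncomputable section

/-- Defining relations for the specialisation at `q = 0` of the generic composition
algebra of the Kronecker quiver, on generators `i = ι ℚ 0` and `j = ι ℚ 1`:
(1) `i^m j^(m+1) i^(m+1) j^(m+2) = i^(2m+1) j^(2m+3)` for all `m ≥ 0`;
(2) `i^(n+2) j^(n+1) i^(n+1) j^n = i^(2n+3) j^(2n+1)` for all `n ≥ 0`;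
(3) `(i^m j^m)(i^n j^n) = (i^n j^n)(i^m j^m)` for all `m, n ≥ 1`. -/
inductive KroneckerRel0 : FreeAlgebra ℚ (Fin 2) → FreeAlgebra ℚ (Fin 2) → Prop
  | preproj (m : ℕ) :
      KroneckerRel0
        (ι ℚ 0 ^ m * ι ℚ 1 ^ (m + 1) * (ι ℚ 0 ^ (m + 1) * ι ℚ 1 ^ (m + 2)))
        (ι ℚ 0 ^ (2 * m + 1) * ι ℚ 1 ^ (2 * m + 3))
  | preinj (n : ℕ) :
      KroneckerRel0
        (ι ℚ 0 ^ (n + 2) * ι ℚ 1 ^ (n + 1) * (ι ℚ 0 ^ (n + 1) * ι ℚ 1 ^ n))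
        (ι ℚ 0 ^ (2 * n + 3) * ι ℚ 1 ^ (2 * n + 1))
  | deltaComm (m n : ℕ) (hm : 1 ≤ m) (hn : 1 ≤ n) :
      KroneckerRel0
        (ι ℚ 0 ^ m * ι ℚ 1 ^ m * (ι ℚ 0 ^ n * ι ℚ 1 ^ n))
        (ι ℚ 0 ^ n * ι ℚ 1 ^ n * (ι ℚ 0 ^ m * ι ℚ 1 ^ m))

/-- `A₀`, the composition algebra of the Kronecker quiver specialised at `q = 0`,
presented by generators `i, j` and the relations above. -/
abbrev A0 : Type := RingQuot KroneckerRel0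

/-- The generator `i` of `A₀`. -/
def iA : A0 := RingQuot.mkAlgHom ℚ KroneckerRel0 (ι ℚ 0)

/-- The generator `j` of `A₀`. -/
def jA : A0 := RingQuot.mkAlgHom ℚ KroneckerRel0 (ι ℚ 1)

/-- The commutator `ij - ji` in `A₀`. -/
def cA : A0 := iA * jA - jA * iA

/-- `P(m) = (ij - ji)^m j` in `A₀`. -/
def PA (m : ℕ) : A0 := cA ^ m * jA

/-- `I(n) = i (ij - ji)^n` in `A₀`. -/
def IA (n : ℕ) : A0 := iA * cA ^ n

/-- `R(1) = ij - ji` and `R(s+1) = i (ij - ji)^s j` for `s ≥ 1` in `A₀`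
(the value at `0` is junk). -/
def RA : ℕ → A0
  | 0 => 0
  | 1 => cA
  | (s + 2) => iA * cA ^ (s + 1) * jA

/-- `δ_m = i^m j^m` in `A₀`. -/
def deltaA (m : ℕ) : A0 := iA ^ m * jA ^ m

noncomputable section

/-- The generator `i` of the free monoid on two letters. -/
def iF : FreeMonoid (Fin 2) := FreeMonoid.of 0

/-- The generator `j` of the free monoid on two letters. -/
def jF : FreeMonoid (Fin 2) := FreeMonoid.of 1

/-- Defining relations of Reineke's composition monoid of the Kronecker quiver:
(1) `i^m j^(m+1) i^(m+1) j^(m+2) = i^(2m+1) j^(2m+3)` for all `m ≥ 0`;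
(2) `i^(n+2) j^(n+1) i^(n+1) j^n = i^(2n+3) j^(2n+1)` for all `n ≥ 0`;
(3) `(ij)^m = i^m j^m` for all `m ≥ 1`. -/
inductive KroneckerMonoidRel : FreeMonoid (Fin 2) → FreeMonoid (Fin 2) → Prop
  | preproj (m : ℕ) :
      KroneckerMonoidRel
        (iF ^ m * jF ^ (m + 1) * (iF ^ (m + 1) * jF ^ (m + 2)))
        (iF ^ (2 * m + 1) * jF ^ (2 * m + 3))
  | preinj (n : ℕ) :
      KroneckerMonoidRel
        (iF ^ (n + 2) * jF ^ (n + 1) * (iF ^ (n + 1) * jF ^ n))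
        (iF ^ (2 * n + 3) * jF ^ (2 * n + 1))
  | delta (m : ℕ) (hm : 1 ≤ m) :
      KroneckerMonoidRel ((iF * jF) ^ m) (iF ^ m * jF ^ m)

/-- `M₀`, Reineke's composition monoid of the Kronecker quiver, presented by
generators `i, j` and the relations above. -/
abbrev M0 : Type := (conGen KroneckerMonoidRel).Quotient

/-- The generator `i` of `M₀`. -/
def iM : M0 := (iF : M0)

/-- The generator `j` of `M₀`. -/
def jM : M0 := (jF : M0)

open Matrix

theorem Matrix.single_pow_eq_zero_of_ne {n α : Type*} [Fintype n] [DecidableEq n] [Semiring α]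
    {a b : n} (hab : a ≠ b) (c : α) {k : ℕ} (hk : 2 ≤ k) : single a b c ^ k = 0 :=
  pow_eq_zero_of_le hk ((sq _).trans (single_mul_single_of_ne c a b a hab.symm c))

theorem MonoidAlgebra.surjective_of_closure_eq_top {R M A : Type*} [CommSemiring R] [Monoid M]
    [Semiring A] [Algebra R A] {S : Set M} (hS : Submonoid.closure S = ⊤)
    (φ : A →ₐ[R] MonoidAlgebra R M) (hφ : ∀ s ∈ S, of R M s ∈ φ.range) :
    Function.Surjective φ := by
  have hof : ∀ m, of R M m ∈ φ.range := by
    have : Submonoid.closure S ≤ φ.range.toSubmonoid.comap (of R M) := Submonoid.closure_le.2 hφ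
    exact fun m ↦ this (hS ▸ Submonoid.mem_top m)
  intro f
  exact Algebra.adjoin_le (by rintro _ ⟨m, -, rfl⟩; exact hof m) (mem_adjoin_support f)

def kroneckerMatrix : Fin 2 → Matrix (Fin 2) (Fin 2) ℚ := ![single 0 1 1, single 1 0 1]

theorem lift_kroneckerMatrix_rel ⦃x y : FreeAlgebra ℚ (Fin 2)⦄ (h : KroneckerRel0 x y) :
    lift ℚ kroneckerMatrix x = lift ℚ kroneckerMatrix y := by
  have hi {k : ℕ} (hk : 2 ≤ k) := single_pow_eq_zero_of_ne (zero_ne_one' (Fin 2)) (1 : ℚ) hk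
  have hj {k : ℕ} (hk : 2 ≤ k) := single_pow_eq_zero_of_ne (one_ne_zero' (Fin 2)) (1 : ℚ) hk
  cases h with
  | preproj m =>
    simp only [map_mul, map_pow, lift_ι_apply, kroneckerMatrix, Matrix.cons_val_zero,
      Matrix.cons_val_one, hj (show 2 ≤ m + 2 by omega), hj (show 2 ≤ 2 * m + 3 by omega),
      mul_zero]
  | preinj n =>
    simp only [map_mul, map_pow, lift_ι_apply, kroneckerMatrix, Matrix.cons_val_zero,
      Matrix.cons_val_one, hi (show 2 ≤ n + 2 by omega), hi (show 2 ≤ 2 * n + 3 by omega),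
      zero_mul]
  | deltaComm m n hm hn =>
    simp only [map_mul, map_pow, lift_ι_apply, kroneckerMatrix, Matrix.cons_val_zero,
      Matrix.cons_val_one]
    obtain rfl | hm2 : m = 1 ∨ 2 ≤ m := by omega
    · obtain rfl | hn2 : n = 1 ∨ 2 ≤ n := by omega
      · rfl
      · simp only [hi hn2, zero_mul, mul_zero]
    · simp only [hi hm2, zero_mul, mul_zero]

def A0.toMatrix : A0 →ₐ[ℚ] Matrix (Fin 2) (Fin 2) ℚ :=
  RingQuot.liftAlgHom ℚ ⟨lift ℚ kroneckerMatrix, lift_kroneckerMatrix_rel⟩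

theorem A0.toMatrix_iA : A0.toMatrix iA = single 0 1 1 := by
  rw [iA, A0.toMatrix, RingQuot.liftAlgHom_mkAlgHom_apply, lift_ι_apply]
  rfl

theorem A0.toMatrix_jA : A0.toMatrix jA = single 1 0 1 := by
  rw [jA, A0.toMatrix, RingQuot.liftAlgHom_mkAlgHom_apply, lift_ι_apply]
  rfl

theorem iA_mul_jA_pow_ne {m : ℕ} (hm : 2 ≤ m) : (iA * jA) ^ m ≠ iA ^ m * jA ^ m := by
  intro h
  have hidem : IsIdempotentElem (single 0 0 1 : Matrix (Fin 2) (Fin 2) ℚ) := by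
    simp [IsIdempotentElem]
  replace h := congrArg A0.toMatrix h
  rw [map_pow, map_mul, map_mul, map_pow, map_pow, A0.toMatrix_iA, A0.toMatrix_jA,
    single_mul_single_same, mul_one, hidem.pow_eq (by omega),
    single_pow_eq_zero_of_ne (zero_ne_one' (Fin 2)) 1 hm, zero_mul] at h
  simpa using congrFun (congrFun h 0) 0

theorem iM_mul_jM_pow {m : ℕ} (hm : 1 ≤ m) : (iM * jM) ^ m = iM ^ m * jM ^ m :=
  (Con.eq _).2 (ConGen.Rel.of _ _ (KroneckerMonoidRel.delta m hm))

theorem closure_iM_jM : Submonoid.closure {iM, jM} = ⊤ := by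
  have hgen : (conGen KroneckerMonoidRel).mk' '' Set.range FreeMonoid.of = {iM, jM} := by
    rw [← Set.range_comp, ← Matrix.range_cons_cons_empty _ _ ![]]
    congr 1
    funext a
    fin_cases a <;> rfl
  rw [← hgen, ← MonoidHom.map_mclosure, FreeMonoid.closure_range_of, ← MonoidHom.mrange_eq_map,
    MonoidHom.mrange_eq_top]
  exact Con.mk'_surjective

theorem composition_monoid_proper_factor :
    (∀ m : ℕ, 2 ≤ m → (iA * jA) ^ m ≠ iA ^ m * jA ^ m) ∧
    (∀ m : ℕ, 1 ≤ m → (iM * jM) ^ m = iM ^ m * jM ^ m) ∧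
    ∀ φ : A0 →ₐ[ℚ] MonoidAlgebra ℚ M0,
      φ iA = MonoidAlgebra.of ℚ M0 iM → φ jA = MonoidAlgebra.of ℚ M0 jM →
      Function.Surjective φ ∧ ¬ Function.Injective φ := by
  refine ⟨fun _ ↦ iA_mul_jA_pow_ne, fun _ ↦ iM_mul_jM_pow, fun φ hi hj ↦ ⟨?_, fun hφ ↦ ?_⟩⟩
  · refine MonoidAlgebra.surjective_of_closure_eq_top closure_iM_jM φ ?_
    rintro s (rfl | rfl)
    exacts [⟨iA, hi⟩, ⟨jA, hj⟩]
  · refine iA_mul_jA_pow_ne le_rfl (hφ ?_)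
    rw [map_pow, map_mul, map_mul, map_pow, map_pow, hi, hj, ← map_mul, ← map_pow, ← map_pow,
      ← map_pow, ← map_mul, iM_mul_jM_pow one_le_two]
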